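/- arXiv:2207.06648 — 3 statements merged into one kernel-verified Lean document; each statement's English description precedes it below -/
import Mathlib

section
/- Along any orbit x_n := f^n(x₀) in K and for any bounded sequence of vectors X_n ∈ E, there is at most one bounded solution of the inhomogeneous tangent equation: if v_n and v'_n are sequences in E with sup_n ‖v_n‖ < ∞, sup_n ‖v'_n‖ < ∞, v_{n+1} = Df(x_n) v_n + X_{n+1} and v'_{n+1} = Df(x_n) v'_n + X_{n+1} for all n ∈ ℤ, then v_n = v'_n for all n ∈ ℤ. (The shadowing vector is the unique bounded inhomogeneous tangent solution.) -/
open Function Set Filter MeasureTheory Topology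

/-!
Subtracting the two solutions leaves a bounded solution `w` of the homogeneous equation
`w (n + 1) = Df (x n) (w n)`. By equivariance of the splitting, its stable and unstable components
solve the same equation. The stable component at time `n` is the image of the one at time `n - k`
under `Df^k`, so it is bounded by `C λ^k` times a uniform bound; letting `k → ∞` kills it. The
unstable component is handled in the same way with `g = f⁻¹` and time reversed.
-/

section Orbit

variable {α : Type*} {f : α → α} {orb : ℤ → α}

theorem orbit_mem_of_image_eq (hf : Injective f) {K : Set α} (hfK : f '' K = K)
    (horb : ∀ n, orb (n + 1) = f (orb n)) (h0 : orb 0 ∈ K) (n : ℤ) : orb n ∈ K := by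
  induction n using Int.induction_on with
  | zero => exact h0
  | succ k ih => rw [horb, ← hfK]; exact mem_image_of_mem f ih
  | pred k ih => rwa [← sub_add_cancel (-(k : ℤ)) 1, horb, ← hfK, hf.mem_set_image] at ih

theorem iterate_apply_of_orbit (horb : ∀ n, orb (n + 1) = f (orb n)) (k : ℕ) (n : ℤ) :
    f^[k] (orb n) = orb (n + k) := by
  induction k with
  | zero => simp
  | succ k ih => rw [iterate_succ_apply', ih, ← horb]; push_cast; ring_nf

theorem orbit_neg_of_leftInverse {g : α → α} (hgf : LeftInverse g f)
    (horb : ∀ n, orb (n + 1) = f (orb n)) (n : ℤ) : orb (-(n + 1)) = g (orb (-n)) := by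
  rw [← hgf (orb (-(n + 1))), ← horb]; congr 2; ring

end Orbit

theorem Submodule.eq_and_eq_of_add_eq_add {R M : Type*} [Ring R] [AddCommGroup M] [Module R M]
    {S U : Submodule R M} (hSU : Disjoint S U) {a b c d : M} (ha : a ∈ S) (hb : b ∈ S)
    (hc : c ∈ U) (hd : d ∈ U) (h : a + c = b + d) : a = b ∧ c = d := by
  have hsum : a - b + (c - d) = 0 := by rw [sub_add_sub_comm, h, sub_self]
  obtain ⟨hab, hcd⟩ :=
    Submodule.disjoint_iff_add_eq_zero.mp hSU (sub_mem ha hb) (sub_mem hc hd) hsum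
  exact ⟨sub_eq_zero.mp hab, sub_eq_zero.mp hcd⟩

theorem norm_eq_zero_of_bounded_of_norm_add_le {F : Type*} [SeminormedAddGroup F] {s : ℤ → F}
    {C lam : ℝ} (hC : 0 ≤ C) (hlam0 : 0 ≤ lam) (hlam1 : lam < 1)
    (hsb : ∃ B, ∀ n, ‖s n‖ ≤ B) (hs : ∀ (k : ℕ) (n : ℤ), ‖s (n + k)‖ ≤ C * lam ^ k * ‖s n‖)
    (n : ℤ) : ‖s n‖ = 0 := by
  obtain ⟨B, hB⟩ := hsb
  have hlim : Tendsto (fun k : ℕ => C * lam ^ k * B) atTop (𝓝 0) := by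
    simpa using ((tendsto_pow_atTop_nhds_zero_of_lt_one hlam0 hlam1).const_mul C).mul_const B
  refine le_antisymm (ge_of_tendsto' hlim fun k => ?_) (norm_nonneg _)
  calc ‖s n‖ = ‖s (n - k + k)‖ := by rw [sub_add_cancel]
  _ ≤ C * lam ^ k * ‖s (n - k)‖ := hs k (n - k)
  _ ≤ C * lam ^ k * B := by gcongr; exact hB _

theorem ContinuousLinearMap.exists_norm_apply_le {𝕜 E F ι : Type*} [NontriviallyNormedField 𝕜]
    [SeminormedAddCommGroup E] [NormedSpace 𝕜 E] [SeminormedAddCommGroup F] [NormedSpace 𝕜 F]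
    {P : ι → E →L[𝕜] F} {w : ι → E} (hP : ∃ M, ∀ i, ‖P i‖ ≤ M) (hw : ∃ B, ∀ i, ‖w i‖ ≤ B) :
    ∃ B, ∀ i, ‖P i (w i)‖ ≤ B :=
  let ⟨M, hM⟩ := hP
  let ⟨B, hB⟩ := hw
  ⟨M * B, fun i => (P i).le_of_opNorm_le_of_le (hM i) (hB i)⟩

section Tangent

variable {𝕜 : Type*} [NontriviallyNormedField 𝕜] {E : Type*} [NormedAddCommGroup E]
  [NormedSpace 𝕜 E] {f : E → E} {orb : ℤ → E} {s : ℤ → E}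

theorem fderiv_iterate_apply_of_orbit (hf : Differentiable 𝕜 f)
    (horb : ∀ n, orb (n + 1) = f (orb n)) (hs : ∀ n, s (n + 1) = fderiv 𝕜 f (orb n) (s n))
    (k : ℕ) (n : ℤ) : fderiv 𝕜 f^[k] (orb n) (s n) = s (n + k) := by
  induction k with
  | zero => simp
  | succ k ih =>
    rw [iterate_succ', fderiv_comp _ (hf _) ((hf.iterate k) _), ContinuousLinearMap.comp_apply,
      ih, iterate_apply_of_orbit horb, ← hs]
    push_cast; ring_nf

theorem fderiv_apply_fderiv_of_leftInverse {g : E → E} (hgf : LeftInverse g f) {x : E}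
    (hg : DifferentiableAt 𝕜 g (f x)) (hf : DifferentiableAt 𝕜 f x) (v : E) :
    fderiv 𝕜 g (f x) (fderiv 𝕜 f x v) = v := by
  have hcomp := fderiv_comp x hg hf
  rw [hgf.comp_eq_id, fderiv_id] at hcomp
  exact (DFunLike.congr_fun hcomp v).symm

theorem tangent_neg_of_leftInverse {g : E → E} (hgf : LeftInverse g f) (hg : Differentiable 𝕜 g)
    (hf : Differentiable 𝕜 f) (horb : ∀ n, orb (n + 1) = f (orb n))
    (hs : ∀ n, s (n + 1) = fderiv 𝕜 f (orb n) (s n)) (n : ℤ) :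
    s (-(n + 1)) = fderiv 𝕜 g (orb (-n)) (s (-n)) := by
  have hn : -n = -(n + 1) + 1 := by ring
  rw [hn, hs, horb, fderiv_apply_fderiv_of_leftInverse hgf (hg _) (hf _)]

theorem eq_zero_of_bounded_of_fderiv_iterate_le (hf : Differentiable 𝕜 f) {K : Set E}
    {V : E → Submodule 𝕜 E} {C lam : ℝ} (hC : 0 ≤ C) (hlam0 : 0 ≤ lam) (hlam1 : lam < 1)
    (hV : ∀ (k : ℕ), ∀ x ∈ K, ∀ v ∈ V x, ‖fderiv 𝕜 (f^[k]) x v‖ ≤ C * lam ^ k * ‖v‖)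
    (horb : ∀ n, orb (n + 1) = f (orb n)) (hK : ∀ n, orb n ∈ K) (hsV : ∀ n, s n ∈ V (orb n))
    (hs : ∀ n, s (n + 1) = fderiv 𝕜 f (orb n) (s n)) (hsb : ∃ B, ∀ n, ‖s n‖ ≤ B) (n : ℤ) :
    s n = 0 := by
  refine norm_eq_zero.mp (norm_eq_zero_of_bounded_of_norm_add_le hC hlam0 hlam1 hsb ?_ n)
  intro k m
  rw [← fderiv_iterate_apply_of_orbit hf horb hs]
  exact hV k _ (hK m) _ (hsV m)

theorem tangent_components_of_map_le {K : Set E} {Vs Vu : E → Submodule 𝕜 E}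
    (hsplit : ∀ x ∈ K, Disjoint (Vs x) (Vu x))
    (hmaps : ∀ x ∈ K, (Vs x).map (fderiv 𝕜 f x : E →ₗ[𝕜] E) ≤ Vs (f x))
    (hmapu : ∀ x ∈ K, (Vu x).map (fderiv 𝕜 f x : E →ₗ[𝕜] E) ≤ Vu (f x))
    (horb : ∀ n, orb (n + 1) = f (orb n)) (hK : ∀ n, orb n ∈ K) {u w : ℤ → E}
    (hw : ∀ n, w (n + 1) = fderiv 𝕜 f (orb n) (w n)) (hs : ∀ n, s n ∈ Vs (orb n))
    (hu : ∀ n, u n ∈ Vu (orb n)) (hsu : ∀ n, s n + u n = w n) (n : ℤ) :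
    s (n + 1) = fderiv 𝕜 f (orb n) (s n) ∧ u (n + 1) = fderiv 𝕜 f (orb n) (u n) := by
  refine Submodule.eq_and_eq_of_add_eq_add (hsplit _ (hK (n + 1))) (hs _) ?_ (hu _) ?_ ?_
  · rw [horb]; exact hmaps _ (hK n) (Submodule.mem_map_of_mem (hs n))
  · rw [horb]; exact hmapu _ (hK n) (Submodule.mem_map_of_mem (hu n))
  · rw [hsu, ← map_add, hsu, hw]

end Tangent

theorem shadowing_uniqueness_discrete_general
    {E : Type*} [NormedAddCommGroup E] [NormedSpace ℝ E]
    (f g : E → E) (hgf : Function.LeftInverse g f)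
    (hf : ContDiff ℝ 1 f) (hg : ContDiff ℝ 1 g)
    (K : Set E) (hfK : f '' K = K)
    (Vs Vu : E → Submodule ℝ E)
    (hsplit : ∀ x ∈ K, IsCompl (Vs x) (Vu x))
    (hequivs : ∀ x ∈ K, (Vs x).map (fderiv ℝ f x : E →ₗ[ℝ] E) = Vs (f x))
    (hequivu : ∀ x ∈ K, (Vu x).map (fderiv ℝ f x : E →ₗ[ℝ] E) = Vu (f x))
    (C lam : ℝ) (hC : 0 < C) (hlam0 : 0 < lam) (hlam1 : lam < 1)
    (hyps : ∀ (n : ℕ), ∀ x ∈ K, ∀ v ∈ Vs x, ‖fderiv ℝ (f^[n]) x v‖ ≤ C * lam ^ n * ‖v‖)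
    (hypu : ∀ (n : ℕ), ∀ x ∈ K, ∀ v ∈ Vu x, ‖fderiv ℝ (g^[n]) x v‖ ≤ C * lam ^ n * ‖v‖)
    (Ps Pu : E → E →L[ℝ] E)
    (hproj : ∀ x ∈ K, ∀ v : E, Ps x v ∈ Vs x ∧ Pu x v ∈ Vu x ∧ Ps x v + Pu x v = v)
    (hPbdd : ∃ M : ℝ, ∀ x ∈ K, ‖Ps x‖ + ‖Pu x‖ ≤ M)
    (orb : ℤ → E) (horb0 : orb 0 ∈ K) (horb : ∀ n : ℤ, orb (n + 1) = f (orb n))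
    (X : ℤ → E)
    (v v' : ℤ → E)
    (hvb : ∃ M : ℝ, ∀ n : ℤ, ‖v n‖ ≤ M) (hv'b : ∃ M : ℝ, ∀ n : ℤ, ‖v' n‖ ≤ M)
    (hv : ∀ n : ℤ, v (n + 1) = fderiv ℝ f (orb n) (v n) + X (n + 1))
    (hv' : ∀ n : ℤ, v' (n + 1) = fderiv ℝ f (orb n) (v' n) + X (n + 1)) :
    ∀ n : ℤ, v n = v' n := by
  have hfd : Differentiable ℝ f := hf.differentiable one_ne_zero
  have hgd : Differentiable ℝ g := hg.differentiable one_ne_zero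
  have hK := orbit_mem_of_image_eq hgf.injective hfK horb horb0
  set w : ℤ → E := v - v'
  have hw : ∀ n, w (n + 1) = fderiv ℝ f (orb n) (w n) := fun n => by
    simp only [w, Pi.sub_apply, hv, hv', map_sub, add_sub_add_right_eq_sub]
  have hwb : ∃ B, ∀ n, ‖w n‖ ≤ B :=
    let ⟨M, hM⟩ := hvb
    let ⟨M', hM'⟩ := hv'b
    ⟨M + M', fun n => (norm_sub_le _ _).trans (add_le_add (hM n) (hM' n))⟩
  obtain ⟨Mp, hMp⟩ := hPbdd
  have hPw := fun n => hproj _ (hK n) (w n)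
  have hcomp := tangent_components_of_map_le (fun x hx => (hsplit x hx).disjoint)
    (fun x hx => (hequivs x hx).le) (fun x hx => (hequivu x hx).le) horb hK hw
    (fun n => (hPw n).1) (fun n => (hPw n).2.1) (fun n => (hPw n).2.2)
  have hsb : ∃ B, ∀ n, ‖Ps (orb n) (w n)‖ ≤ B := ContinuousLinearMap.exists_norm_apply_le
    ⟨Mp, fun n => (le_add_of_nonneg_right (norm_nonneg _)).trans (hMp _ (hK n))⟩ hwb
  have hub : ∃ B, ∀ n, ‖Pu (orb n) (w n)‖ ≤ B := ContinuousLinearMap.exists_norm_apply_le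
    ⟨Mp, fun n => (le_add_of_nonneg_left (norm_nonneg _)).trans (hMp _ (hK n))⟩ hwb
  have hs0 : ∀ n, Ps (orb n) (w n) = 0 :=
    eq_zero_of_bounded_of_fderiv_iterate_le hfd hC.le hlam0.le hlam1 hyps horb hK
      (fun n => (hPw n).1) (fun n => (hcomp n).1) hsb
  have hu0 : ∀ n, Pu (orb (-n)) (w (-n)) = 0 :=
    eq_zero_of_bounded_of_fderiv_iterate_le hgd hC.le hlam0.le hlam1 hypu
      (orbit_neg_of_leftInverse hgf horb) (fun n => hK _) (fun n => (hPw _).2.1)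
      (tangent_neg_of_leftInverse (s := fun n => Pu (orb n) (w n)) hgf hgd hfd horb
        fun n => (hcomp n).2)
      (hub.imp fun _ hB n => hB (-n))
  intro n
  have hwn : w n = 0 := by rw [← (hPw n).2.2, hs0, ← neg_neg n, hu0, add_zero]
  exact sub_eq_zero.mp hwn

theorem shadowing_uniqueness_discrete
    {E : Type*} [NormedAddCommGroup E] [NormedSpace ℝ E] [FiniteDimensional ℝ E]
    (f g : E → E) (hgf : Function.LeftInverse g f) (hfg : Function.RightInverse g f)
    (hf : ContDiff ℝ 1 f) (hg : ContDiff ℝ 1 g)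
    (K : Set E) (hKc : IsCompact K) (hfK : f '' K = K)
    (Vs Vu : E → Submodule ℝ E)
    (hsplit : ∀ x ∈ K, IsCompl (Vs x) (Vu x))
    (hequivs : ∀ x ∈ K, (Vs x).map (fderiv ℝ f x : E →ₗ[ℝ] E) = Vs (f x))
    (hequivu : ∀ x ∈ K, (Vu x).map (fderiv ℝ f x : E →ₗ[ℝ] E) = Vu (f x))
    (C lam : ℝ) (hC : 0 < C) (hlam0 : 0 < lam) (hlam1 : lam < 1)
    (hyps : ∀ (n : ℕ), ∀ x ∈ K, ∀ v ∈ Vs x, ‖fderiv ℝ (f^[n]) x v‖ ≤ C * lam ^ n * ‖v‖)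
    (hypu : ∀ (n : ℕ), ∀ x ∈ K, ∀ v ∈ Vu x, ‖fderiv ℝ (g^[n]) x v‖ ≤ C * lam ^ n * ‖v‖)
    (Ps Pu : E → E →L[ℝ] E)
    (hproj : ∀ x ∈ K, ∀ v : E, Ps x v ∈ Vs x ∧ Pu x v ∈ Vu x ∧ Ps x v + Pu x v = v)
    (hPbdd : ∃ M : ℝ, ∀ x ∈ K, ‖Ps x‖ + ‖Pu x‖ ≤ M)
    (orb : ℤ → E) (horb0 : orb 0 ∈ K) (horb : ∀ n : ℤ, orb (n + 1) = f (orb n))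
    (X : ℤ → E) (hXb : ∃ M : ℝ, ∀ n : ℤ, ‖X n‖ ≤ M)
    (v v' : ℤ → E)
    (hvb : ∃ M : ℝ, ∀ n : ℤ, ‖v n‖ ≤ M) (hv'b : ∃ M : ℝ, ∀ n : ℤ, ‖v' n‖ ≤ M)
    (hv : ∀ n : ℤ, v (n + 1) = fderiv ℝ f (orb n) (v n) + X (n + 1))
    (hv' : ∀ n : ℤ, v' (n + 1) = fderiv ℝ f (orb n) (v' n) + X (n + 1)) :
    ∀ n : ℤ, v n = v' n :=
  shadowing_uniqueness_discrete_general f g hgf hf hg K hfK Vs Vu hsplit hequivs hequivu C lam hC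
    hlam0 hlam1 hyps hypu Ps Pu hproj hPbdd orb horb0 horb X v v' hvb hv'b hv hv'
end

section
/- (Hölder continuity of the split-propagate scheme.) Suppose additionally that for some α ∈ (0,1] the operator-valued maps x ↦ Df(x) P^s(x) and x ↦ Df(x) P^u(x) are α-Hölder continuous on K, and let X be a bounded α-Hölder vector field on K. Then the shadowing vector field v(x) := Σ_{k≥0} Df^k(f^{-k}x) P^s(f^{-k}x) X(f^{-k}x) − Σ_{k≥1} Df^{-k}(f^{k}x) P^u(f^{k}x) X(f^{k}x) is Hölder continuous on K: there exist β ∈ (0, α] and C' > 0 such that ‖v(x) − v(y)‖ ≤ C' ‖x − y‖^β for all x, y ∈ K. -/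
open Function Set Filter MeasureTheory Topology
open scoped NNReal

/-!
Write `v = ∑ₖ Tₖ` with `Tₖ = (f^k)_* (P^s X) - (g^(k+1))_* (P^u X)`. Uniform hyperbolicity gives
`‖Tₖ‖ ≤ A λ^k` on `K`, while the chain rule `D(f^(k+1)) P^s = (D(f^k) P^s ∘ f) (Df P^s)` shows
that the `α`-Hölder constant of `Tₖ` grows at most like `Γ^k`; the Hölder continuity of `P^s`,
`P^u` and `Dg P^u` needed here follows from that of `Df P^s` and `Df P^u`, through
`P = (Dg ∘ f) (Df P)` and `Dg = (Df ∘ g)⁻¹`. With `d = ‖x - y‖` this gives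
`‖Tₖ x - Tₖ y‖ ≤ min (2A λ^k) (B Γ^k d^α) ≤ (2A)^(1-θ) B^θ (λ^(1-θ) Γ^θ)^k d^(αθ)`,
and for small `θ > 0` the ratio `λ^(1-θ) Γ^θ` is `< 1`: summing over `k` gives the exponent
`β = αθ`.
-/

theorem min_le_rpow_mul_rpow {a b t : ℝ} (ha : 0 ≤ a) (hb : 0 ≤ b) (ht0 : 0 ≤ t) (ht1 : t ≤ 1) :
    min a b ≤ a ^ (1 - t) * b ^ t := by
  have hmin := le_min ha hb
  calc min a b = min a b ^ (1 - t) * min a b ^ t := by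
        rw [← Real.rpow_add' hmin (by norm_num), sub_add_cancel, Real.rpow_one]
    _ ≤ a ^ (1 - t) * b ^ t := by
        gcongr
        · exact min_le_left a b
        · exact min_le_right a b

theorem exists_rpow_one_sub_mul_rpow_lt_one {ρ Γ : ℝ} (hρ0 : 0 < ρ) (hρ1 : ρ < 1) (hΓ : 0 < Γ) :
    ∃ θ : ℝ≥0, 0 < θ ∧ θ ≤ 1 ∧ ρ ^ (1 - (θ : ℝ)) * Γ ^ (θ : ℝ) < 1 := by
  have hcont : ContinuousAt (fun θ : ℝ => ρ ^ (1 - θ) * Γ ^ θ) 0 := by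
    fun_prop (disch := positivity)
  have hlt : ∀ᶠ θ in 𝓝[>] (0 : ℝ), ρ ^ (1 - θ) * Γ ^ θ < 1 :=
    nhdsWithin_le_nhds (hcont.eventually_lt continuousAt_const (by simpa using hρ1))
  obtain ⟨θ, hθ, hθ0, hθ1⟩ := (hlt.and (Ioc_mem_nhdsGT zero_lt_one)).exists
  lift θ to ℝ≥0 using hθ0.le
  exact ⟨θ, by exact_mod_cast hθ0, by exact_mod_cast hθ1, hθ⟩

theorem norm_tsum_le_of_norm_le_min {E : Type*} [SeminormedAddCommGroup E] {u : ℕ → E}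
    {a b ρ Γ θ : ℝ} (ha : 0 ≤ a) (hb : 0 ≤ b) (hρ : 0 ≤ ρ) (hΓ : 0 ≤ Γ) (hθ0 : 0 ≤ θ)
    (hθ1 : θ ≤ 1) (hμ : ρ ^ (1 - θ) * Γ ^ θ < 1)
    (hu : ∀ k, ‖u k‖ ≤ min (a * ρ ^ k) (b * Γ ^ k)) :
    ‖∑' k, u k‖ ≤ a ^ (1 - θ) * b ^ θ / (1 - ρ ^ (1 - θ) * Γ ^ θ) := by
  have hμ0 : 0 ≤ ρ ^ (1 - θ) * Γ ^ θ := by positivity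
  rw [div_eq_mul_inv]
  refine tsum_of_norm_bounded ((hasSum_geometric_of_lt_one hμ0 hμ).mul_left _) fun k => ?_
  calc ‖u k‖ ≤ (a * ρ ^ k) ^ (1 - θ) * (b * Γ ^ k) ^ θ :=
        (hu k).trans (min_le_rpow_mul_rpow (by positivity) (by positivity) hθ0 hθ1)
    _ = a ^ (1 - θ) * b ^ θ * (ρ ^ (1 - θ) * Γ ^ θ) ^ k := by
        rw [Real.mul_rpow ha (by positivity), Real.mul_rpow hb (by positivity),
          ← Real.rpow_pow_comm hρ, ← Real.rpow_pow_comm hΓ, mul_pow]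
        ring

namespace HolderOnWith

variable {X Y Z W : Type*} [SeminormedAddCommGroup X] [SeminormedAddCommGroup Y]
  [SeminormedAddCommGroup Z] [SeminormedAddCommGroup W]
  {C C' r : ℝ≥0} {f g : X → Y} {s : Set X}

theorem of_norm_sub_le (h : ∀ x ∈ s, ∀ y ∈ s, ‖f x - f y‖ ≤ C * ‖x - y‖ ^ (r : ℝ)) :
    HolderOnWith C r f s := by
  intro x hx y hy
  rw [edist_dist, edist_dist, ENNReal.ofReal_rpow_of_nonneg dist_nonneg r.coe_nonneg,
    ← ENNReal.ofReal_coe_nnreal, ← ENNReal.ofReal_mul C.coe_nonneg]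
  exact ENNReal.ofReal_le_ofReal (by simpa only [dist_eq_norm] using h x hx y hy)

theorem toNNReal_of_norm_sub_le {c : ℝ}
    (h : ∀ x ∈ s, ∀ y ∈ s, ‖f x - f y‖ ≤ c * ‖x - y‖ ^ (r : ℝ)) :
    HolderOnWith c.toNNReal r f s :=
  of_norm_sub_le fun x hx y hy => (h x hx y hy).trans (by gcongr; exact Real.le_coe_toNNReal c)

theorem norm_sub_le (hf : HolderOnWith C r f s) {x y : X} (hx : x ∈ s) (hy : y ∈ s) :
    ‖f x - f y‖ ≤ C * ‖x - y‖ ^ (r : ℝ) := by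
  simpa only [dist_eq_norm] using hf.dist_le hx hy

theorem congr (hf : HolderOnWith C r f s) (hfg : EqOn f g s) : HolderOnWith C r g s := by
  intro x hx y hy
  rw [← hfg hx, ← hfg hy]
  exact hf x hx y hy

protected theorem add (hf : HolderOnWith C r f s) (hg : HolderOnWith C' r g s) :
    HolderOnWith (C + C') r (f + g) s :=
  of_norm_sub_le fun x hx y hy => by
    calc ‖(f + g) x - (f + g) y‖ = ‖(f x - f y) + (g x - g y)‖ := by
          simp only [Pi.add_apply]; abel_nf
      _ ≤ C * ‖x - y‖ ^ (r : ℝ) + C' * ‖x - y‖ ^ (r : ℝ) :=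
          (norm_add_le _ _).trans (add_le_add (hf.norm_sub_le hx hy) (hg.norm_sub_le hx hy))
      _ = _ := by push_cast; ring

protected theorem sub (hf : HolderOnWith C r f s) (hg : HolderOnWith C' r g s) :
    HolderOnWith (C + C') r (f - g) s :=
  of_norm_sub_le fun x hx y hy => by
    calc ‖(f - g) x - (f - g) y‖ = ‖(f x - f y) - (g x - g y)‖ := by
          simp only [Pi.sub_apply]; abel_nf
      _ ≤ C * ‖x - y‖ ^ (r : ℝ) + C' * ‖x - y‖ ^ (r : ℝ) :=
          (_root_.norm_sub_le _ _).trans (add_le_add (hf.norm_sub_le hx hy) (hg.norm_sub_le hx hy))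
      _ = _ := by push_cast; ring

theorem comp_lipschitzOnWith {g : Y → Z} {t : Set Y} (hg : HolderOnWith C r g t) {L : ℝ≥0}
    (hf : LipschitzOnWith L f s) (hst : MapsTo f s t) :
    HolderOnWith (C * L ^ (r : ℝ)) r (g ∘ f) s := by
  simpa using hg.comp (holderOnWith_one.2 hf) hst

section Operators

variable [NormedSpace ℝ Y] [NormedSpace ℝ Z] [NormedSpace ℝ W]

theorem clm_apply₂ (B : Y →L[ℝ] Z →L[ℝ] W) (hB : ∀ u w, ‖B u w‖ ≤ ‖u‖ * ‖w‖)
    {u : X → Y} {w : X → Z} {a b : ℝ≥0} (hu : HolderOnWith C r u s) (hw : HolderOnWith C' r w s)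
    (hua : ∀ x ∈ s, ‖u x‖ ≤ a) (hwb : ∀ x ∈ s, ‖w x‖ ≤ b) :
    HolderOnWith (C * b + a * C') r (fun x => B (u x) (w x)) s :=
  of_norm_sub_le fun x hx y hy => by
    calc ‖B (u x) (w x) - B (u y) (w y)‖ = ‖B (u x - u y) (w x) + B (u y) (w x - w y)‖ := by
          simp only [map_sub, sub_apply]; abel_nf
      _ ≤ ‖u x - u y‖ * ‖w x‖ + ‖u y‖ * ‖w x - w y‖ :=
          (norm_add_le _ _).trans (add_le_add (hB _ _) (hB _ _))
      _ ≤ C * ‖x - y‖ ^ (r : ℝ) * b + a * (C' * ‖x - y‖ ^ (r : ℝ)) := by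
          gcongr
          exacts [hu.norm_sub_le hx hy, hwb x hx, hua y hy, hw.norm_sub_le hx hy]
      _ = _ := by push_cast; ring

theorem clm_comp {A : X → Z →L[ℝ] W} {B : X → Y →L[ℝ] Z} {a b : ℝ≥0}
    (hA : HolderOnWith C r A s) (hB : HolderOnWith C' r B s)
    (hAa : ∀ x ∈ s, ‖A x‖ ≤ a) (hBb : ∀ x ∈ s, ‖B x‖ ≤ b) :
    HolderOnWith (C * b + a * C') r (fun x => (A x).comp (B x)) s :=
  clm_apply₂ (ContinuousLinearMap.compL ℝ Y Z W)
    (fun _ _ => ContinuousLinearMap.opNorm_comp_le _ _) hA hB hAa hBb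

theorem clm_apply {A : X → Y →L[ℝ] Z} {v : X → Y} {a b : ℝ≥0}
    (hA : HolderOnWith C r A s) (hv : HolderOnWith C' r v s)
    (hAa : ∀ x ∈ s, ‖A x‖ ≤ a) (hvb : ∀ x ∈ s, ‖v x‖ ≤ b) :
    HolderOnWith (C * b + a * C') r (fun x => A x (v x)) s :=
  clm_apply₂ (ContinuousLinearMap.apply ℝ Z).flip
    (fun _ _ => ContinuousLinearMap.le_opNorm _ _) hA hv hAa hvb

theorem of_clm_inverse {A B : X → Y →L[ℝ] Y} {b : ℝ≥0} (hA : HolderOnWith C r A s)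
    (hBb : ∀ x ∈ s, ‖B x‖ ≤ b) (hBA : ∀ x ∈ s, (B x).comp (A x) = .id ℝ Y)
    (hAB : ∀ x ∈ s, (A x).comp (B x) = .id ℝ Y) :
    HolderOnWith (b * C * b) r B s := by
  refine of_norm_sub_le fun x hx y hy => ?_
  have hdiff : B x - B y = (B x).comp ((A y - A x).comp (B y)) := by
    rw [ContinuousLinearMap.sub_comp, ContinuousLinearMap.comp_sub, hAB y hy,
      ← ContinuousLinearMap.comp_assoc, hBA x hx, ContinuousLinearMap.id_comp,
      ContinuousLinearMap.comp_id]
  calc ‖B x - B y‖ ≤ ‖B x‖ * (‖A y - A x‖ * ‖B y‖) := by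
        rw [hdiff]
        exact (ContinuousLinearMap.opNorm_comp_le _ _).trans
          (by gcongr; exact ContinuousLinearMap.opNorm_comp_le _ _)
    _ ≤ b * (C * ‖x - y‖ ^ (r : ℝ) * b) := by
        gcongr
        exacts [hBb x hx, norm_sub_rev (A y) (A x) ▸ hA.norm_sub_le hx hy, hBb y hy]
    _ = _ := by push_cast; ring

theorem exists_pow_of_succ_eq_comp {Φ : ℕ → X → Y →L[ℝ] Y} {Ψ : X → Y →L[ℝ] Y} {F : X → X}
    {C₀ CΨ L a b : ℝ≥0} (hrec : ∀ n, ∀ x ∈ s, Φ (n + 1) x = (Φ n (F x)).comp (Ψ x))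
    (h₀ : HolderOnWith C₀ r (Φ 0) s) (hΨ : HolderOnWith CΨ r Ψ s)
    (hΦa : ∀ n, ∀ x ∈ s, ‖Φ n x‖ ≤ a) (hΨb : ∀ x ∈ s, ‖Ψ x‖ ≤ b)
    (hF : LipschitzOnWith L F s) (hFs : MapsTo F s s) :
    ∃ D Λ : ℝ≥0, 1 ≤ Λ ∧ ∀ n, HolderOnWith (D * Λ ^ n) r (Φ n) s := by
  refine ⟨C₀ + a * CΨ, L ^ (r : ℝ) * b + 1, le_add_self, fun n => ?_⟩
  induction n with
  | zero => simpa using h₀.mono_const le_self_add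
  | succ n ih =>
    have hstep := (ih.comp_lipschitzOnWith hF hFs).clm_comp hΨ
      (fun x hx => hΦa n (F x) (hFs hx)) hΨb
    refine (hstep.congr fun x hx => (hrec n x hx).symm).mono_const ?_
    have hD : a * CΨ ≤ (C₀ + a * CΨ) * (L ^ (r : ℝ) * b + 1) ^ n :=
      le_add_self.trans (le_mul_of_one_le_right' (one_le_pow₀ le_add_self))
    calc _ ≤ (C₀ + a * CΨ) * (L ^ (r : ℝ) * b + 1) ^ n * L ^ (r : ℝ) * b
          + (C₀ + a * CΨ) * (L ^ (r : ℝ) * b + 1) ^ n := by gcongr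
      _ = _ := by ring

end Operators

end HolderOnWith

theorem LipschitzOnWith.iterate {X : Type*} [PseudoEMetricSpace X] {f : X → X} {s : Set X}
    {L : ℝ≥0} (hf : LipschitzOnWith L f s) (hfs : MapsTo f s s) (n : ℕ) :
    LipschitzOnWith (L ^ n) f^[n] s := by
  induction n with
  | zero => simpa using LipschitzWith.id.lipschitzOnWith
  | succ n ih => simpa [iterate_succ, pow_succ] using ih.comp hf hfs

section DecayingHolderSeq

variable {X E : Type*} [SeminormedAddCommGroup X] [NormedAddCommGroup E]

def IsDecayingHolderSeq (ρ : ℝ) (r : ℝ≥0) (s : Set X) (T : ℕ → X → E) : Prop :=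
  ∃ (A : ℝ) (B Γ : ℝ≥0), ∀ k,
    (∀ x ∈ s, ‖T k x‖ ≤ A * ρ ^ k) ∧ HolderOnWith (B * Γ ^ k) r (T k) s

namespace IsDecayingHolderSeq

variable {ρ : ℝ} {r : ℝ≥0} {s : Set X} {T U : ℕ → X → E}

theorem summable [CompleteSpace E] (hT : IsDecayingHolderSeq ρ r s T) (hρ0 : 0 ≤ ρ)
    (hρ1 : ρ < 1) {x : X} (hx : x ∈ s) : Summable (T · x) := by
  obtain ⟨A, _, _, hT⟩ := hT
  exact .of_norm_bounded ((summable_geometric_of_lt_one hρ0 hρ1).mul_left A)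
    fun k => (hT k).1 x hx

theorem succ (hT : IsDecayingHolderSeq ρ r s T) :
    IsDecayingHolderSeq ρ r s (fun k => T (k + 1)) := by
  obtain ⟨A, B, Γ, hT⟩ := hT
  refine ⟨A * ρ, B * Γ, Γ, fun k => ⟨fun x hx => ?_, ?_⟩⟩
  · simpa [pow_succ, mul_assoc, mul_comm ρ] using (hT (k + 1)).1 x hx
  · simpa [pow_succ, mul_assoc, mul_comm Γ] using (hT (k + 1)).2

protected theorem sub (hT : IsDecayingHolderSeq ρ r s T) (hU : IsDecayingHolderSeq ρ r s U) :
    IsDecayingHolderSeq ρ r s (T - U) := by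
  obtain ⟨A, B, Γ, hT⟩ := hT
  obtain ⟨A', B', Γ', hU⟩ := hU
  refine ⟨A + A', B + B', Γ + Γ', fun k => ⟨fun x hx => ?_, ?_⟩⟩
  · calc ‖(T - U) k x‖ ≤ ‖T k x‖ + ‖U k x‖ := norm_sub_le _ _
      _ ≤ A * ρ ^ k + A' * ρ ^ k := add_le_add ((hT k).1 x hx) ((hU k).1 x hx)
      _ = _ := by ring
  · refine ((hT k).2.sub (hU k).2).mono_const ?_
    calc B * Γ ^ k + B' * Γ' ^ k ≤ B * (Γ + Γ') ^ k + B' * (Γ + Γ') ^ k := by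
          gcongr
          exacts [le_self_add, le_add_self]
      _ = _ := by ring

theorem exists_holderOnWith_tsum [CompleteSpace E] (hT : IsDecayingHolderSeq ρ r s T)
    (hρ0 : 0 < ρ) (hρ1 : ρ < 1) :
    ∃ θ C : ℝ≥0, 0 < θ ∧ θ ≤ 1 ∧ HolderOnWith C (θ * r) (fun x => ∑' k, T k x) s := by
  have hsum := fun x (hx : x ∈ s) => hT.summable hρ0.le hρ1 hx
  obtain ⟨A, B, Γ, hT⟩ := hT
  obtain ⟨θ, hθ0, hθ1, hμ⟩ :=
    exists_rpow_one_sub_mul_rpow_lt_one hρ0 hρ1 (by positivity : (0 : ℝ) < Γ + 1)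
  set μ := ρ ^ (1 - (θ : ℝ)) * ((Γ : ℝ) + 1) ^ (θ : ℝ)
  refine ⟨θ, ((2 * A) ^ (1 - (θ : ℝ)) * B ^ (θ : ℝ) / (1 - μ)).toNNReal, hθ0, hθ1,
    HolderOnWith.of_norm_sub_le fun x hx y hy => ?_⟩
  have hA : 0 ≤ A := by simpa using (norm_nonneg _).trans ((hT 0).1 x hx)
  have hterm : ∀ k, ‖T k x - T k y‖
      ≤ min (2 * A * ρ ^ k) (B * ‖x - y‖ ^ (r : ℝ) * ((Γ : ℝ) + 1) ^ k) := fun k => by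
    refine le_min ?_ ?_
    · calc ‖T k x - T k y‖ ≤ ‖T k x‖ + ‖T k y‖ := norm_sub_le _ _
        _ ≤ A * ρ ^ k + A * ρ ^ k := add_le_add ((hT k).1 x hx) ((hT k).1 y hy)
        _ = 2 * A * ρ ^ k := by ring
    · calc ‖T k x - T k y‖ ≤ B * Γ ^ k * ‖x - y‖ ^ (r : ℝ) := by
            exact_mod_cast (hT k).2.norm_sub_le hx hy
        _ ≤ B * ‖x - y‖ ^ (r : ℝ) * ((Γ : ℝ) + 1) ^ k := by
            rw [mul_right_comm]; gcongr; linarith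
  rw [← (hsum x hx).tsum_sub (hsum y hy)]
  calc ‖∑' k, (T k x - T k y)‖
      ≤ (2 * A) ^ (1 - (θ : ℝ)) * (B * ‖x - y‖ ^ (r : ℝ)) ^ (θ : ℝ) / (1 - μ) :=
        norm_tsum_le_of_norm_le_min (by positivity) (by positivity) hρ0.le (by positivity)
          θ.coe_nonneg (by exact_mod_cast hθ1) hμ hterm
    _ = (2 * A) ^ (1 - (θ : ℝ)) * B ^ (θ : ℝ) / (1 - μ) * ‖x - y‖ ^ ((θ * r : ℝ≥0) : ℝ) := by
        rw [Real.mul_rpow B.coe_nonneg (by positivity), ← Real.rpow_mul (norm_nonneg _)]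
        push_cast
        ring_nf
    _ ≤ _ := by gcongr; exact Real.le_coe_toNNReal _

end IsDecayingHolderSeq

end DecayingHolderSeq

theorem apply_eq_self_of_disjoint {R M : Type*} [Ring R] [AddCommGroup M] [Module R M]
    {V W : Submodule R M} (hVW : Disjoint V W) {P Q : M → M} (hP : ∀ v, P v ∈ V)
    (hQ : ∀ v, Q v ∈ W) (hPQ : ∀ v, P v + Q v = v) {w : M} (hw : w ∈ V) : P w = w := by
  have hQV : Q w ∈ V := by
    rw [eq_sub_of_add_eq' (hPQ w)]
    exact V.sub_mem hw (hP w)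
  simpa [Submodule.disjoint_def.mp hVW _ hQV (hQ w)] using hPQ w

theorem Submodule.apply_mem_of_map_eq {R M M₂ : Type*} [Semiring R] [AddCommMonoid M]
    [AddCommMonoid M₂] [Module R M] [Module R M₂] {V : Submodule R M} {W : Submodule R M₂}
    {A : M →ₗ[R] M₂} {B : M₂ → M} (hBA : ∀ u, B (A u) = u) (h : V.map A = W) {w : M₂}
    (hw : w ∈ W) : B w ∈ V := by
  rw [← h] at hw
  obtain ⟨u, hu, rfl⟩ := hw
  rwa [hBA]

section Dynamics

variable {E : Type*} [NormedAddCommGroup E] [NormedSpace ℝ E]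

structure IsLipschitzDiffeoOn (f g : E → E) (K : Set E) (L : ℝ≥0) : Prop where
  left_inv : LeftInverse g f
  right_inv : RightInverse g f
  differentiable : Differentiable ℝ f
  differentiable_inv : Differentiable ℝ g
  mapsTo : MapsTo f K K
  mapsTo_inv : MapsTo g K K
  lipschitzOnWith : LipschitzOnWith L f K
  lipschitzOnWith_inv : LipschitzOnWith L g K
  norm_fderiv_le : ∀ x ∈ K, ‖fderiv ℝ f x‖ ≤ L
  norm_fderiv_inv_le : ∀ x ∈ K, ‖fderiv ℝ g x‖ ≤ L

theorem ContDiff.exists_lipschitzOnWith_norm_fderiv_le {f : E → E} (hf : ContDiff ℝ 1 f)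
    {K : Set E} (hK : IsCompact K) :
    ∃ L : ℝ≥0, LipschitzOnWith L f K ∧ ∀ x ∈ K, ‖fderiv ℝ f x‖ ≤ L := by
  obtain ⟨L, hL⟩ := hf.locallyLipschitz.locallyLipschitzOn.exists_lipschitzOnWith_of_compact hK
  obtain ⟨D, hD⟩ :=
    hK.exists_bound_of_continuousOn (hf.continuous_fderiv one_ne_zero).continuousOn
  refine ⟨max L D.toNNReal, hL.weaken (le_max_left _ _), fun x hx => (hD x hx).trans ?_⟩
  exact (Real.le_coe_toNNReal D).trans (by exact_mod_cast le_max_right _ _)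

theorem exists_isLipschitzDiffeoOn {f g : E → E} (hgf : LeftInverse g f)
    (hfg : RightInverse g f) (hf : ContDiff ℝ 1 f) (hg : ContDiff ℝ 1 g) {K : Set E}
    (hK : IsCompact K) (hfK : f '' K = K) : ∃ L, IsLipschitzDiffeoOn f g K L := by
  obtain ⟨Lf, hfL, hDf⟩ := hf.exists_lipschitzOnWith_norm_fderiv_le hK
  obtain ⟨Lg, hgL, hDg⟩ := hg.exists_lipschitzOnWith_norm_fderiv_le hK
  have hgK : MapsTo g K K := fun x hx => by
    rwa [← hfK, image_eq_preimage_of_inverse hgf hfg] at hx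
  refine ⟨max Lf Lg, hgf, hfg, hf.differentiable one_ne_zero, hg.differentiable one_ne_zero,
    (mapsTo_image f K).mono_right hfK.subset, hgK, hfL.weaken (le_max_left _ _),
    hgL.weaken (le_max_right _ _), fun x hx => (hDf x hx).trans ?_,
    fun x hx => (hDg x hx).trans ?_⟩
  all_goals exact_mod_cast (by simp : _ ≤ max Lf Lg)

namespace IsLipschitzDiffeoOn

variable {f g : E → E} {K : Set E} {L : ℝ≥0}

theorem symm (h : IsLipschitzDiffeoOn f g K L) : IsLipschitzDiffeoOn g f K L :=
  ⟨h.right_inv, h.left_inv, h.differentiable_inv, h.differentiable, h.mapsTo_inv, h.mapsTo,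
    h.lipschitzOnWith_inv, h.lipschitzOnWith, h.norm_fderiv_inv_le, h.norm_fderiv_le⟩

theorem fderiv_inv_comp_fderiv (h : IsLipschitzDiffeoOn f g K L) (x : E) :
    (fderiv ℝ g (f x)).comp (fderiv ℝ f x) = .id ℝ E := by
  rw [← fderiv_comp x (h.differentiable_inv _) (h.differentiable x), h.left_inv.comp_eq_id,
    fderiv_id]

theorem fderiv_inv_mem_of_map_eq (h : IsLipschitzDiffeoOn f g K L) {V : E → Submodule ℝ E}
    (hV : ∀ x ∈ K, (V x).map (fderiv ℝ f x : E →ₗ[ℝ] E) = V (f x)) {x : E} (hx : x ∈ K)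
    {v : E} (hv : v ∈ V x) : fderiv ℝ g x v ∈ V (g x) := by
  refine Submodule.apply_mem_of_map_eq (fun u => ?_) (hV _ (h.mapsTo_inv hx))
    (by rwa [h.right_inv x])
  simpa [h.right_inv x] using DFunLike.congr_fun (h.fderiv_inv_comp_fderiv (g x)) u

theorem norm_fderiv_comp_le (h : IsLipschitzDiffeoOn f g K L) {P : E → E →L[ℝ] E} {M : ℝ≥0}
    (hPM : ∀ x ∈ K, ‖P x‖ ≤ M) {x : E} (hx : x ∈ K) :
    ‖(fderiv ℝ f x).comp (P x)‖ ≤ (L * M : ℝ≥0) :=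
  (ContinuousLinearMap.opNorm_comp_le _ _).trans <| by
    push_cast; exact mul_le_mul (h.norm_fderiv_le x hx) (hPM x hx) (norm_nonneg _) L.coe_nonneg

theorem holderOnWith_fderiv_inv (h : IsLipschitzDiffeoOn f g K L) {C r : ℝ≥0}
    (hDf : HolderOnWith C r (fderiv ℝ f) K) :
    HolderOnWith (L * (C * L ^ (r : ℝ)) * L) r (fderiv ℝ g) K := by
  refine (hDf.comp_lipschitzOnWith h.lipschitzOnWith_inv h.mapsTo_inv).of_clm_inverse
    h.norm_fderiv_inv_le (fun x _ => ?_) (fun x _ => h.symm.fderiv_inv_comp_fderiv x)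
  simpa [h.right_inv x] using h.fderiv_inv_comp_fderiv (g x)

theorem holderOnWith_of_fderiv_comp (h : IsLipschitzDiffeoOn f g K L) {CDg C M r : ℝ≥0}
    {P : E → E →L[ℝ] E} (hDg : HolderOnWith CDg r (fderiv ℝ g) K) (hPM : ∀ x ∈ K, ‖P x‖ ≤ M)
    (hDfP : HolderOnWith C r (fun x => (fderiv ℝ f x).comp (P x)) K) :
    HolderOnWith (CDg * L ^ (r : ℝ) * (L * M) + L * C) r P K := by
  refine ((hDg.comp_lipschitzOnWith h.lipschitzOnWith h.mapsTo).clm_comp hDfP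
    (fun x hx => h.norm_fderiv_inv_le _ (h.mapsTo hx)) (fun x hx => h.norm_fderiv_comp_le hPM hx)
    ).congr fun x _ => ?_
  simp [← ContinuousLinearMap.comp_assoc, h.fderiv_inv_comp_fderiv]

theorem holderOnWith_splitting (h : IsLipschitzDiffeoOn f g K L) {P Q : E → E →L[ℝ] E}
    {M C r : ℝ≥0} (hPQ : ∀ x ∈ K, ∀ v, P x v + Q x v = v) (hPM : ∀ x ∈ K, ‖P x‖ ≤ M)
    (hQM : ∀ x ∈ K, ‖Q x‖ ≤ M) (hP : HolderOnWith C r (fun x => (fderiv ℝ f x).comp (P x)) K)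
    (hQ : HolderOnWith C r (fun x => (fderiv ℝ f x).comp (Q x)) K) :
    ∃ C₁ C₂ C₃ : ℝ≥0, HolderOnWith C₁ r P K ∧ HolderOnWith C₂ r Q K ∧
      HolderOnWith C₃ r (fun x => (fderiv ℝ g x).comp (Q x)) K := by
  have hDf : HolderOnWith (C + C) r (fderiv ℝ f) K := (hP.add hQ).congr fun x hx => by
    ext v; simp [← map_add, hPQ x hx v]
  have hDg := h.holderOnWith_fderiv_inv hDf
  have hQ' := h.holderOnWith_of_fderiv_comp hDg hQM hQ
  exact ⟨_, _, _, h.holderOnWith_of_fderiv_comp hDg hPM hP, hQ',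
    hDg.clm_comp hQ' h.norm_fderiv_inv_le hQM⟩

end IsLipschitzDiffeoOn

/-- The push-forward `(F^k)_* Y`, for `G` an inverse of `F`. -/
noncomputable def pushforwardIterate (F G Y : E → E) (k : ℕ) (x : E) : E :=
  fderiv ℝ F^[k] (G^[k] x) (Y (G^[k] x))

structure IsContractingProjection (F : E → E) (K : Set E) (V : E → Submodule ℝ E)
    (P : E → E →L[ℝ] E) (C ρ : ℝ) : Prop where
  apply_mem : ∀ x ∈ K, ∀ v, P x v ∈ V x
  apply_of_mem : ∀ x ∈ K, ∀ v ∈ V x, P x v = v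
  fderiv_mem : ∀ x ∈ K, ∀ v ∈ V x, fderiv ℝ F x v ∈ V (F x)
  norm_fderiv_iterate_le : ∀ n : ℕ, ∀ x ∈ K, ∀ v ∈ V x, ‖fderiv ℝ F^[n] x v‖ ≤ C * ρ ^ n * ‖v‖

namespace IsContractingProjection

variable {F G : E → E} {K : Set E} {V : E → Submodule ℝ E} {P : E → E →L[ℝ] E} {C ρ : ℝ}

theorem of_disjoint {W : E → Submodule ℝ E} {Q : E → E →L[ℝ] E}
    (hVW : ∀ x ∈ K, Disjoint (V x) (W x))
    (hPQ : ∀ x ∈ K, ∀ v, P x v ∈ V x ∧ Q x v ∈ W x ∧ P x v + Q x v = v)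
    (hDF : ∀ x ∈ K, ∀ v ∈ V x, fderiv ℝ F x v ∈ V (F x))
    (hcontr : ∀ n : ℕ, ∀ x ∈ K, ∀ v ∈ V x, ‖fderiv ℝ F^[n] x v‖ ≤ C * ρ ^ n * ‖v‖) :
    IsContractingProjection F K V P C ρ where
  apply_mem x hx v := (hPQ x hx v).1
  apply_of_mem x hx _ hv := apply_eq_self_of_disjoint (hVW x hx) (hPQ x hx · |>.1)
    (hPQ x hx · |>.2.1) (hPQ x hx · |>.2.2) hv
  fderiv_mem := hDF
  norm_fderiv_iterate_le := hcontr

theorem norm_fderiv_iterate_comp_le (h : IsContractingProjection F K V P C ρ) (hC : 0 ≤ C)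
    (hρ : 0 ≤ ρ) {M : ℝ≥0} (hPM : ∀ x ∈ K, ‖P x‖ ≤ M) (n : ℕ) {x : E} (hx : x ∈ K) :
    ‖(fderiv ℝ F^[n] x).comp (P x)‖ ≤ C * ρ ^ n * M := by
  refine ContinuousLinearMap.opNorm_le_bound _ (by positivity) fun w => ?_
  calc ‖fderiv ℝ F^[n] x (P x w)‖ ≤ C * ρ ^ n * ‖P x w‖ :=
        h.norm_fderiv_iterate_le n x hx _ (h.apply_mem x hx w)
    _ ≤ C * ρ ^ n * (M * ‖w‖) := by
        gcongr
        exact (P x).le_opNorm w |>.trans (by gcongr; exact hPM x hx)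
    _ = _ := by ring

theorem fderiv_iterate_succ_comp (h : IsContractingProjection F K V P C ρ)
    (hF : Differentiable ℝ F) (hFK : MapsTo F K K) (n : ℕ) {x : E} (hx : x ∈ K) :
    (fderiv ℝ F^[n + 1] x).comp (P x)
      = ((fderiv ℝ F^[n] (F x)).comp (P (F x))).comp ((fderiv ℝ F x).comp (P x)) := by
  ext w
  rw [iterate_succ, fderiv_comp x (hF.iterate n (F x)) (hF x)]
  simp [h.apply_of_mem _ (hFK hx) _ (h.fderiv_mem x hx _ (h.apply_mem x hx w))]

theorem isDecayingHolderSeq_pushforwardIterate (h : IsContractingProjection F K V P C ρ)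
    (hC : 0 ≤ C) (hρ0 : 0 ≤ ρ) (hρ1 : ρ ≤ 1) {r L M CP CD MX CX : ℝ≥0} {X : E → E}
    (hd : IsLipschitzDiffeoOn F G K L) (hPM : ∀ x ∈ K, ‖P x‖ ≤ M) (hP : HolderOnWith CP r P K)
    (hDFP : HolderOnWith CD r (fun x => (fderiv ℝ F x).comp (P x)) K)
    (hXM : ∀ x ∈ K, ‖X x‖ ≤ MX) (hX : HolderOnWith CX r X K) :
    IsDecayingHolderSeq ρ r K (pushforwardIterate F G fun x => P x (X x)) := by
  have hΦ := h.norm_fderiv_iterate_comp_le hC hρ0 hPM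
  set a := (C * M).toNNReal
  have hΦa : ∀ n, ∀ x ∈ K, ‖(fderiv ℝ F^[n] x).comp (P x)‖ ≤ a := fun n x hx =>
    (hΦ n hx).trans <| by
      calc C * ρ ^ n * M ≤ C * 1 * M := by gcongr; exact pow_le_one₀ hρ0 hρ1
        _ ≤ a := by rw [mul_one]; exact Real.le_coe_toNNReal _
  obtain ⟨D, Λ, hΛ, hD⟩ := HolderOnWith.exists_pow_of_succ_eq_comp
    (fun n x hx => h.fderiv_iterate_succ_comp hd.differentiable hd.mapsTo n hx)
    (hP.congr fun x _ => by simp) hDFP hΦa (fun x hx => hd.norm_fderiv_comp_le hPM hx)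
    hd.lipschitzOnWith hd.mapsTo
  refine ⟨C * M * MX, D * MX + a * CX, Λ * L ^ (r : ℝ), fun k => ⟨fun x hx => ?_, ?_⟩⟩
  · have hGx := hd.mapsTo_inv.iterate k hx
    calc ‖(fderiv ℝ F^[k] (G^[k] x)).comp (P (G^[k] x)) (X (G^[k] x))‖
        ≤ C * ρ ^ k * M * MX := (ContinuousLinearMap.le_opNorm _ _).trans <| by
          gcongr; exacts [hΦ k hGx, hXM _ hGx]
      _ = _ := by ring
  · refine (((hD k).clm_apply hX (hΦa k) hXM).comp_lipschitzOnWith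
      (hd.lipschitzOnWith_inv.iterate hd.mapsTo_inv k) (hd.mapsTo_inv.iterate k)).mono_const ?_
    have haCX : a * CX ≤ a * CX * Λ ^ k := le_mul_of_one_le_right' (one_le_pow₀ hΛ)
    calc (D * Λ ^ k * MX + a * CX) * (L ^ k) ^ (r : ℝ)
        ≤ (D * MX * Λ ^ k + a * CX * Λ ^ k) * (L ^ (r : ℝ)) ^ k := by
          rw [← NNReal.rpow_natCast_mul, mul_comm (k : ℝ), NNReal.rpow_mul_natCast,
            mul_right_comm D]
          gcongr
      _ = _ := by ring

end IsContractingProjection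

end Dynamics

theorem shadowing_vector_holder_general
    {E : Type*} [NormedAddCommGroup E] [NormedSpace ℝ E] [FiniteDimensional ℝ E]
    (f g : E → E) (hgf : Function.LeftInverse g f) (hfg : Function.RightInverse g f)
    (hf : ContDiff ℝ 1 f) (hg : ContDiff ℝ 1 g)
    (K : Set E) (hKc : IsCompact K) (hfK : f '' K = K)
    (Vs Vu : E → Submodule ℝ E)
    (hsplit : ∀ x ∈ K, IsCompl (Vs x) (Vu x))
    (hequivs : ∀ x ∈ K, (Vs x).map (fderiv ℝ f x : E →ₗ[ℝ] E) = Vs (f x))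
    (hequivu : ∀ x ∈ K, (Vu x).map (fderiv ℝ f x : E →ₗ[ℝ] E) = Vu (f x))
    (C lam : ℝ) (hC : 0 < C) (hlam0 : 0 < lam) (hlam1 : lam < 1)
    (hyps : ∀ (n : ℕ), ∀ x ∈ K, ∀ v ∈ Vs x, ‖fderiv ℝ (f^[n]) x v‖ ≤ C * lam ^ n * ‖v‖)
    (hypu : ∀ (n : ℕ), ∀ x ∈ K, ∀ v ∈ Vu x, ‖fderiv ℝ (g^[n]) x v‖ ≤ C * lam ^ n * ‖v‖)
    (Ps Pu : E → E →L[ℝ] E)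
    (hproj : ∀ x ∈ K, ∀ v : E, Ps x v ∈ Vs x ∧ Pu x v ∈ Vu x ∧ Ps x v + Pu x v = v)
    (hPbdd : ∃ M : ℝ, ∀ x ∈ K, ‖Ps x‖ + ‖Pu x‖ ≤ M)
    (α : ℝ) (hα0 : 0 < α) (Cα : ℝ)
    (hHs : ∀ x ∈ K, ∀ y ∈ K,
      ‖(fderiv ℝ f x).comp (Ps x) - (fderiv ℝ f y).comp (Ps y)‖ ≤ Cα * ‖x - y‖ ^ α)
    (hHu : ∀ x ∈ K, ∀ y ∈ K,
      ‖(fderiv ℝ f x).comp (Pu x) - (fderiv ℝ f y).comp (Pu y)‖ ≤ Cα * ‖x - y‖ ^ α)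
    (X : E → E) (hXb : ∃ M : ℝ, ∀ x ∈ K, ‖X x‖ ≤ M)
    (hXH : ∀ x ∈ K, ∀ y ∈ K, ‖X x - X y‖ ≤ Cα * ‖x - y‖ ^ α)
    (v : E → E)
    (hv : ∀ x : E, v x =
      (∑' k : ℕ, fderiv ℝ (f^[k]) (g^[k] x) (Ps (g^[k] x) (X (g^[k] x)))) -
      ∑' k : ℕ, fderiv ℝ (g^[k+1]) (f^[k+1] x) (Pu (f^[k+1] x) (X (f^[k+1] x)))) :
    ∃ β : ℝ, 0 < β ∧ β ≤ α ∧
      ∃ C' > 0, ∀ x ∈ K, ∀ y ∈ K, ‖v x - v y‖ ≤ C' * ‖x - y‖ ^ β := by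
  obtain ⟨L, hd⟩ := exists_isLipschitzDiffeoOn hgf hfg hf hg hKc hfK
  obtain ⟨M, hM⟩ := hPbdd
  obtain ⟨MX, hMX⟩ := hXb
  have hPsM : ∀ x ∈ K, ‖Ps x‖ ≤ M.toNNReal := fun x hx =>
    ((le_add_of_nonneg_right (norm_nonneg _)).trans (hM x hx)).trans (Real.le_coe_toNNReal _)
  have hPuM : ∀ x ∈ K, ‖Pu x‖ ≤ M.toNNReal := fun x hx =>
    ((le_add_of_nonneg_left (norm_nonneg _)).trans (hM x hx)).trans (Real.le_coe_toNNReal _)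
  have hXM : ∀ x ∈ K, ‖X x‖ ≤ MX.toNNReal := fun x hx => (hMX x hx).trans (Real.le_coe_toNNReal _)
  set r : ℝ≥0 := ⟨α, hα0.le⟩
  have hX := HolderOnWith.toNNReal_of_norm_sub_le (r := r) hXH
  have hDfPs := HolderOnWith.toNNReal_of_norm_sub_le (r := r) hHs
  obtain ⟨_, _, _, hPs, hPu, hDgPu⟩ := hd.holderOnWith_splitting
    (fun x hx v => (hproj x hx v).2.2) hPsM hPuM hDfPs (HolderOnWith.toNNReal_of_norm_sub_le hHu)
  have hs : IsContractingProjection f K Vs Ps C lam :=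
    .of_disjoint (fun x hx => (hsplit x hx).disjoint) hproj
      (fun x hx v hv => hequivs x hx ▸ Submodule.mem_map_of_mem hv) hyps
  have hu : IsContractingProjection g K Vu Pu C lam :=
    .of_disjoint (fun x hx => (hsplit x hx).disjoint.symm)
      (fun x hx v =>
        ⟨(hproj x hx v).2.1, (hproj x hx v).1, add_comm (Pu x v) _ ▸ (hproj x hx v).2.2⟩)
      (fun x hx v hv => hd.fderiv_inv_mem_of_map_eq hequivu hx hv) hypu
  have hS := hs.isDecayingHolderSeq_pushforwardIterate hC.le hlam0.le hlam1.le hd hPsM hPs hDfPs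
    hXM hX
  have hU := hu.isDecayingHolderSeq_pushforwardIterate hC.le hlam0.le hlam1.le hd.symm hPuM hPu
    hDgPu hXM hX
  obtain ⟨θ, C', hθ0, hθ1, hH⟩ := (hS.sub hU.succ).exists_holderOnWith_tsum hlam0 hlam1
  have hvH := hH.congr (g := v) fun x hx => by
    rw [hv x]
    exact (hS.summable hlam0.le hlam1 hx).tsum_sub (hU.succ.summable hlam0.le hlam1 hx)
  refine ⟨θ * α, by positivity, mul_le_of_le_one_left hα0.le (by exact_mod_cast hθ1), C' + 1,
    by positivity, fun x hx y hy => ?_⟩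
  calc ‖v x - v y‖ ≤ C' * ‖x - y‖ ^ ((θ : ℝ) * α) := hvH.norm_sub_le hx hy
    _ ≤ (C' + 1) * ‖x - y‖ ^ ((θ : ℝ) * α) := by gcongr; linarith

theorem shadowing_vector_holder
    {E : Type*} [NormedAddCommGroup E] [NormedSpace ℝ E] [FiniteDimensional ℝ E]
    (f g : E → E) (hgf : Function.LeftInverse g f) (hfg : Function.RightInverse g f)
    (hf : ContDiff ℝ 1 f) (hg : ContDiff ℝ 1 g)
    (K : Set E) (hKc : IsCompact K) (hfK : f '' K = K)
    (Vs Vu : E → Submodule ℝ E)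
    (hsplit : ∀ x ∈ K, IsCompl (Vs x) (Vu x))
    (hequivs : ∀ x ∈ K, (Vs x).map (fderiv ℝ f x : E →ₗ[ℝ] E) = Vs (f x))
    (hequivu : ∀ x ∈ K, (Vu x).map (fderiv ℝ f x : E →ₗ[ℝ] E) = Vu (f x))
    (C lam : ℝ) (hC : 0 < C) (hlam0 : 0 < lam) (hlam1 : lam < 1)
    (hyps : ∀ (n : ℕ), ∀ x ∈ K, ∀ v ∈ Vs x, ‖fderiv ℝ (f^[n]) x v‖ ≤ C * lam ^ n * ‖v‖)
    (hypu : ∀ (n : ℕ), ∀ x ∈ K, ∀ v ∈ Vu x, ‖fderiv ℝ (g^[n]) x v‖ ≤ C * lam ^ n * ‖v‖)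
    (Ps Pu : E → E →L[ℝ] E)
    (hproj : ∀ x ∈ K, ∀ v : E, Ps x v ∈ Vs x ∧ Pu x v ∈ Vu x ∧ Ps x v + Pu x v = v)
    (hPbdd : ∃ M : ℝ, ∀ x ∈ K, ‖Ps x‖ + ‖Pu x‖ ≤ M)
    (α : ℝ) (hα0 : 0 < α) (hα1 : α ≤ 1) (Cα : ℝ)
    (hHs : ∀ x ∈ K, ∀ y ∈ K,
      ‖(fderiv ℝ f x).comp (Ps x) - (fderiv ℝ f y).comp (Ps y)‖ ≤ Cα * ‖x - y‖ ^ α)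
    (hHu : ∀ x ∈ K, ∀ y ∈ K,
      ‖(fderiv ℝ f x).comp (Pu x) - (fderiv ℝ f y).comp (Pu y)‖ ≤ Cα * ‖x - y‖ ^ α)
    (X : E → E) (hXb : ∃ M : ℝ, ∀ x ∈ K, ‖X x‖ ≤ M)
    (hXH : ∀ x ∈ K, ∀ y ∈ K, ‖X x - X y‖ ≤ Cα * ‖x - y‖ ^ α)
    (v : E → E)
    (hv : ∀ x : E, v x =
      (∑' k : ℕ, fderiv ℝ (f^[k]) (g^[k] x) (Ps (g^[k] x) (X (g^[k] x)))) -
      ∑' k : ℕ, fderiv ℝ (g^[k+1]) (f^[k+1] x) (Pu (f^[k+1] x) (X (f^[k+1] x)))) :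
    ∃ β : ℝ, 0 < β ∧ β ≤ α ∧
      ∃ C' > 0, ∀ x ∈ K, ∀ y ∈ K, ‖v x - v y‖ ≤ C' * ‖x - y‖ ^ β :=
  shadowing_vector_holder_general f g hgf hfg hf hg K hKc hfK Vs Vu hsplit hequivs hequivu C lam hC
    hlam0 hlam1 hyps hypu Ps Pu hproj hPbdd α hα0 Cα hHs hHu X hXb hXH v hv
end

section
/- Let x_n := f^n(x₀) be an orbit in K. If ν_n ∈ E* satisfies the homogeneous adjoint equation ν_n = ν_{n+1} ∘ Df(x_n) for all n ∈ ℤ and sup_{n∈ℤ} ‖ν_n‖ < ∞, then ν_n = 0 for all n ∈ ℤ. (A bounded homogeneous adjoint solution along an orbit of a hyperbolic set is identically zero.) -/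
/-!
Along the orbit, `ν n = ν (n + m) ∘ D(f^m)(x_n)`, and also `ν n = ν (n - m) ∘ D(g^m)(x_n)` because
`D(g^m)(x_n)` inverts `D(f^m)(x_{n-m})`. The first map contracts `V^s(x_n)` and the second `V^u(x_n)`
like `C λ^m`, so as `‖ν‖` is bounded, `ν n` of either component of a vector is `O(λ^m)` for every
`m`, hence zero.
-/

open Function Set Filter Topology

lemma le_zero_of_forall_le_mul_pow {x c lam : ℝ} (hlam0 : 0 ≤ lam) (hlam1 : lam < 1)
    (h : ∀ m : ℕ, x ≤ c * lam ^ m) : x ≤ 0 := by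
  have hlim : Tendsto (fun m : ℕ => c * lam ^ m) atTop (𝓝 0) := by
    simpa using (tendsto_pow_atTop_nhds_zero_of_lt_one hlam0 hlam1).const_mul c
  exact ge_of_tendsto' hlim h

section Orbit

variable {α : Type*} {f g : α → α} {orb : ℤ → α}

lemma orbit_add_nat (horb : ∀ n, orb (n + 1) = f (orb n)) (n : ℤ) (m : ℕ) :
    orb (n + m) = f^[m] (orb n) := by
  induction m with
  | zero => simp
  | succ m ih => rw [Nat.cast_succ, ← add_assoc, horb, ih, iterate_succ_apply']

lemma orbit_sub_nat (horb : ∀ n, orb (n + 1) = f (orb n)) (hgf : LeftInverse g f)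
    (n : ℤ) (m : ℕ) : g^[m] (orb n) = orb (n - m) := by
  conv_lhs => rw [← sub_add_cancel n (m : ℤ), orbit_add_nat horb]
  exact hgf.iterate m _

lemma orbit_mem (horb : ∀ n, orb (n + 1) = f (orb n)) (hf : Injective f) {K : Set α}
    (hfK : f '' K = K) (h0 : orb 0 ∈ K) (n : ℤ) : orb n ∈ K := by
  induction n using Int.induction_on with
  | zero => exact h0
  | succ k ih => rw [horb, ← hfK]; exact mem_image_of_mem f ih
  | pred k ih =>
    rw [← hfK, ← sub_add_cancel (-(k : ℤ)) 1, horb] at ih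
    obtain ⟨y, hy, hfy⟩ := ih
    exact hf hfy ▸ hy

end Orbit

section Adjoint

variable {𝕜 E F : Type*} [NontriviallyNormedField 𝕜] [NormedAddCommGroup E] [NormedSpace 𝕜 E]
  [NormedAddCommGroup F] [NormedSpace 𝕜 F]

lemma fderiv_apply_fderiv_of_rightInverse {f : F → E} {g : E → F} (hfg : RightInverse g f)
    {x : E} (hf : DifferentiableAt 𝕜 f (g x)) (hg : DifferentiableAt 𝕜 g x) (v : E) :
    fderiv 𝕜 f (g x) (fderiv 𝕜 g x v) = v := by
  rw [← ContinuousLinearMap.comp_apply, ← fderiv_comp x hf hg, hfg.comp_eq_id, fderiv_id]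
  rfl

lemma fderiv_iterate_succ {f : E → E} (hf : Differentiable 𝕜 f) (m : ℕ) (x : E) :
    fderiv 𝕜 f^[m + 1] x = (fderiv 𝕜 f (f^[m] x)).comp (fderiv 𝕜 f^[m] x) := by
  rw [iterate_succ']
  exact fderiv_comp x (hf _) ((hf.iterate m) x)

variable {f g : E → E} {orb : ℤ → E} {ν : ℤ → E →L[𝕜] F}

lemma adjoint_eq_comp_fderiv_iterate (hf : Differentiable 𝕜 f)
    (horb : ∀ n, orb (n + 1) = f (orb n))
    (hν : ∀ n, ν n = (ν (n + 1)).comp (fderiv 𝕜 f (orb n))) (n : ℤ) (m : ℕ) :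
    ν n = (ν (n + m)).comp (fderiv 𝕜 f^[m] (orb n)) := by
  induction m with
  | zero => ext; simp
  | succ m ih =>
    rw [fderiv_iterate_succ hf, ← ContinuousLinearMap.comp_assoc, ← orbit_add_nat horb,
      Nat.cast_succ, ← add_assoc, ← hν, ih]

lemma adjoint_eq_apply_fderiv_inverse_iterate (hf : Differentiable 𝕜 f)
    (hg : Differentiable 𝕜 g) (hgf : LeftInverse g f) (hfg : RightInverse g f)
    (horb : ∀ n, orb (n + 1) = f (orb n))
    (hν : ∀ n, ν n = (ν (n + 1)).comp (fderiv 𝕜 f (orb n))) (n : ℤ) (m : ℕ) (v : E) :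
    ν n v = ν (n - m) (fderiv 𝕜 g^[m] (orb n) v) := by
  rw [adjoint_eq_comp_fderiv_iterate hf horb hν (n - m) m, sub_add_cancel,
    ContinuousLinearMap.comp_apply, ← orbit_sub_nat horb hgf,
    fderiv_apply_fderiv_of_rightInverse (hfg.iterate m) ((hf.iterate m) _) ((hg.iterate m) _)]

lemma apply_eq_zero_of_forall_eq_apply_norm_le {ι : Type*} {ν : ι → E →L[𝕜] F} {M C lam : ℝ}
    (hM : ∀ j, ‖ν j‖ ≤ M) (hlam0 : 0 ≤ lam) (hlam1 : lam < 1) {i : ι} {v : E}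
    (h : ∀ m : ℕ, ∃ j w, ν i v = ν j w ∧ ‖w‖ ≤ C * lam ^ m * ‖v‖) : ν i v = 0 := by
  refine norm_le_zero_iff.1 (le_zero_of_forall_le_mul_pow (c := M * C * ‖v‖) hlam0 hlam1 ?_)
  intro m
  obtain ⟨j, w, hvw, hw⟩ := h m
  calc ‖ν i v‖ = ‖ν j w‖ := by rw [hvw]
    _ ≤ ‖ν j‖ * ‖w‖ := (ν j).le_opNorm w
    _ ≤ M * (C * lam ^ m * ‖v‖) :=
      mul_le_mul (hM j) hw (norm_nonneg _) ((norm_nonneg _).trans (hM j))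
    _ = M * C * ‖v‖ * lam ^ m := by ring

end Adjoint

theorem bounded_homogeneous_adjoint_zero_general
    {E : Type*} [NormedAddCommGroup E] [NormedSpace ℝ E]
    (f g : E → E) (hgf : Function.LeftInverse g f) (hfg : Function.RightInverse g f)
    (hf : ContDiff ℝ 1 f) (hg : ContDiff ℝ 1 g)
    (K : Set E) (hfK : f '' K = K)
    (Vs Vu : E → Submodule ℝ E)
    (hsplit : ∀ x ∈ K, IsCompl (Vs x) (Vu x))
    (C lam : ℝ) (hlam0 : 0 < lam) (hlam1 : lam < 1)
    (hyps : ∀ (n : ℕ), ∀ x ∈ K, ∀ v ∈ Vs x, ‖fderiv ℝ (f^[n]) x v‖ ≤ C * lam ^ n * ‖v‖)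
    (hypu : ∀ (n : ℕ), ∀ x ∈ K, ∀ v ∈ Vu x, ‖fderiv ℝ (g^[n]) x v‖ ≤ C * lam ^ n * ‖v‖)
    (orb : ℤ → E) (horb0 : orb 0 ∈ K) (horb : ∀ n : ℤ, orb (n + 1) = f (orb n))
    (ν : ℤ → E →L[ℝ] ℝ)
    (hν : ∀ n : ℤ, ν n = (ν (n + 1)).comp (fderiv ℝ f (orb n)))
    (hνb : ∃ M : ℝ, ∀ n : ℤ, ‖ν n‖ ≤ M) :
    ∀ n : ℤ, ν n = 0 := by
  obtain ⟨M, hM⟩ := hνb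
  have hdf : Differentiable ℝ f := hf.differentiable one_ne_zero
  have hdg : Differentiable ℝ g := hg.differentiable one_ne_zero
  have hK := orbit_mem horb hgf.injective hfK horb0
  intro n
  ext v
  have hv : v ∈ Vs (orb n) ⊔ Vu (orb n) := (hsplit _ (hK n)).sup_eq_top ▸ Submodule.mem_top
  obtain ⟨s, hs, u, hu, rfl⟩ := Submodule.mem_sup.1 hv
  have hs0 : ν n s = 0 := apply_eq_zero_of_forall_eq_apply_norm_le hM hlam0.le hlam1 fun m =>
    ⟨n + m, _, by rw [adjoint_eq_comp_fderiv_iterate hdf horb hν n m]; rfl,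
      hyps m _ (hK n) s hs⟩
  have hu0 : ν n u = 0 := apply_eq_zero_of_forall_eq_apply_norm_le hM hlam0.le hlam1 fun m =>
    ⟨n - m, _, adjoint_eq_apply_fderiv_inverse_iterate hdf hdg hgf hfg horb hν n m u,
      hypu m _ (hK n) u hu⟩
  simp [hs0, hu0]

theorem bounded_homogeneous_adjoint_zero
    {E : Type*} [NormedAddCommGroup E] [NormedSpace ℝ E] [FiniteDimensional ℝ E]
    (f g : E → E) (hgf : Function.LeftInverse g f) (hfg : Function.RightInverse g f)
    (hf : ContDiff ℝ 1 f) (hg : ContDiff ℝ 1 g)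
    (K : Set E) (hKc : IsCompact K) (hfK : f '' K = K)
    (Vs Vu : E → Submodule ℝ E)
    (hsplit : ∀ x ∈ K, IsCompl (Vs x) (Vu x))
    (hequivs : ∀ x ∈ K, (Vs x).map (fderiv ℝ f x : E →ₗ[ℝ] E) = Vs (f x))
    (hequivu : ∀ x ∈ K, (Vu x).map (fderiv ℝ f x : E →ₗ[ℝ] E) = Vu (f x))
    (C lam : ℝ) (hC : 0 < C) (hlam0 : 0 < lam) (hlam1 : lam < 1)
    (hyps : ∀ (n : ℕ), ∀ x ∈ K, ∀ v ∈ Vs x, ‖fderiv ℝ (f^[n]) x v‖ ≤ C * lam ^ n * ‖v‖)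
    (hypu : ∀ (n : ℕ), ∀ x ∈ K, ∀ v ∈ Vu x, ‖fderiv ℝ (g^[n]) x v‖ ≤ C * lam ^ n * ‖v‖)
    (Ps Pu : E → E →L[ℝ] E)
    (hproj : ∀ x ∈ K, ∀ v : E, Ps x v ∈ Vs x ∧ Pu x v ∈ Vu x ∧ Ps x v + Pu x v = v)
    (hPbdd : ∃ M : ℝ, ∀ x ∈ K, ‖Ps x‖ + ‖Pu x‖ ≤ M)
    (orb : ℤ → E) (horb0 : orb 0 ∈ K) (horb : ∀ n : ℤ, orb (n + 1) = f (orb n))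
    (ν : ℤ → E →L[ℝ] ℝ)
    (hν : ∀ n : ℤ, ν n = (ν (n + 1)).comp (fderiv ℝ f (orb n)))
    (hνb : ∃ M : ℝ, ∀ n : ℤ, ‖ν n‖ ≤ M) :
    ∀ n : ℤ, ν n = 0 :=
  bounded_homogeneous_adjoint_zero_general f g hgf hfg hf hg K hfK Vs Vu hsplit C lam hlam0 hlam1
    hyps hypu orb horb0 horb ν hν hνb
end
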